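/- arXiv:1707.02013 — 4 statements merged into one kernel-verified Lean document; each statement's English description precedes it below -/
import Mathlib

section
/- Let n, n1, n2, n3 be integers with n = n1 - n2 + n3, n1 ≠ n and n3 ≠ n. Then |n1^4 - n2^4 + n3^4 - n^4| ≥ max(n1^2, n2^2, n3^2, n^2). -/
/-! The phase factors as `-(n - n1) (n - n3) W` with `W = n1² + n2² + n3² + n² + 2 (n1 + n3)²`.
Off resonance the two linear factors are nonzero integers, so `|φ| ≥ W`, and `W` dominates each
of the four squares. -/

section CommRing

variable {R : Type*} [CommRing R]

def phaseWeight (n n1 n2 n3 : R) : R :=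
  n1 ^ 2 + n2 ^ 2 + n3 ^ 2 + n ^ 2 + 2 * (n1 + n3) ^ 2

theorem phase_eq_neg_mul_phaseWeight {n n1 n2 n3 : R} (h : n = n1 - n2 + n3) :
    n1 ^ 4 - n2 ^ 4 + n3 ^ 4 - n ^ 4 = -((n - n1) * (n - n3) * phaseWeight n n1 n2 n3) := by
  subst h
  unfold phaseWeight
  ring

end CommRing

section OrderedRing

variable {R : Type*} [CommRing R] [LinearOrder R] [IsStrictOrderedRing R]

theorem phaseWeight_nonneg (n n1 n2 n3 : R) : 0 ≤ phaseWeight n n1 n2 n3 := by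
  unfold phaseWeight
  positivity

theorem max_sq_le_phaseWeight (n n1 n2 n3 : R) :
    max (max (n1 ^ 2) (n2 ^ 2)) (max (n3 ^ 2) (n ^ 2)) ≤ phaseWeight n n1 n2 n3 := by
  unfold phaseWeight
  have := sq_nonneg n1
  have := sq_nonneg n2
  have := sq_nonneg n3
  have := sq_nonneg n
  have := sq_nonneg (n1 + n3)
  simp only [max_le_iff]
  refine ⟨⟨?_, ?_⟩, ?_, ?_⟩ <;> linarith

end OrderedRing

theorem Int.le_abs_mul_of_ne_zero {c x : ℤ} (hc : c ≠ 0) (hx : 0 ≤ x) : x ≤ |c * x| := by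
  rw [abs_mul, abs_of_nonneg hx]
  exact le_mul_of_one_le_left hx (Int.one_le_abs hc)

theorem phase_lower_bound (n n1 n2 n3 : ℤ) (h : n = n1 - n2 + n3)
    (h1 : n1 ≠ n) (h3 : n3 ≠ n) :
    max (max (n1 ^ 2) (n2 ^ 2)) (max (n3 ^ 2) (n ^ 2)) ≤
      |n1 ^ 4 - n2 ^ 4 + n3 ^ 4 - n ^ 4| := by
  have hres : (n - n1) * (n - n3) ≠ 0 :=
    mul_ne_zero (sub_ne_zero.2 h1.symm) (sub_ne_zero.2 h3.symm)
  rw [phase_eq_neg_mul_phaseWeight h, abs_neg]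
  exact (max_sq_le_phaseWeight n n1 n2 n3).trans
    (Int.le_abs_mul_of_ne_zero hres (phaseWeight_nonneg n n1 n2 n3))
end

section
/- Let n, n1, n2, n3 be integers with n = n1 - n2 + n3. Define φ = n1^4 - n2^4 + n3^4 - n^4 and μ = -n1^2 + n2^2 - n3^2 + n^2. Then |φ| ≥ μ^2 / 4. -/
theorem phase_vs_nls_phase (n n1 n2 n3 : ℤ) (h : n = n1 - n2 + n3) :
    ((-n1 ^ 2 + n2 ^ 2 - n3 ^ 2 + n ^ 2 : ℤ) : ℝ) ^ 2 / 4 ≤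
      |((n1 ^ 4 - n2 ^ 4 + n3 ^ 4 - n ^ 4 : ℤ) : ℝ)| := by
  subst h
  have key : (-n1 ^ 2 + n2 ^ 2 - n3 ^ 2 + (n1 - n2 + n3) ^ 2) ^ 2 ≤
      4 * |n1 ^ 4 - n2 ^ 4 + n3 ^ 4 - (n1 - n2 + n3) ^ 4| := by
    set φ : ℤ := n1 ^ 4 - n2 ^ 4 + n3 ^ 4 - (n1 - n2 + n3) ^ 4 with hφdef
    set a : ℤ := n1 - n2 with ha
    set b : ℤ := n3 - n2 with hb
    set S : ℤ := n1 ^ 2 + n2 ^ 2 + n3 ^ 2 + (n1 - n2 + n3) ^ 2 + 2 * (n1 + n3) ^ 2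
      with hS
    have hphi : φ = -(a * b) * S := by rw [hφdef, ha, hb, hS]; ring
    have hmu : (-n1 ^ 2 + n2 ^ 2 - n3 ^ 2 + (n1 - n2 + n3) ^ 2) = 2 * (a * b) := by
      rw [ha, hb]; ring
    have hS2 : a ^ 2 + b ^ 2 ≤ 2 * S := by
      rw [ha, hb, hS]
      nlinarith [sq_nonneg (n1 + n3 - n2), sq_nonneg (n1 + n3), sq_nonneg n2,
        sq_nonneg n1, sq_nonneg n3]
    rw [hmu]
    rcases le_or_gt 0 (a * b) with hab | hab
    · have h1 : a * b ≤ S := by nlinarith [sq_nonneg (a - b)]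
      have h2 : 0 ≤ (a * b) * (S - a * b) := mul_nonneg hab (by linarith)
      nlinarith [neg_abs_le φ]
    · have h1 : -(a * b) ≤ S := by nlinarith [sq_nonneg (a + b)]
      have h2 : 0 ≤ (-(a * b)) * (S + a * b) := mul_nonneg (by linarith) (by linarith)
      nlinarith [le_abs_self φ]
  have hcast : ((((-n1 ^ 2 + n2 ^ 2 - n3 ^ 2 + (n1 - n2 + n3) ^ 2) ^ 2 : ℤ)) : ℝ) ≤
      ((4 * |n1 ^ 4 - n2 ^ 4 + n3 ^ 4 - (n1 - n2 + n3) ^ 4| : ℤ) : ℝ) :=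
    Int.cast_le.2 key
  push_cast at hcast ⊢
  rw [div_le_iff₀ (by norm_num : (0:ℝ) < 4)]
  linarith [hcast]
end

section
/- Let s0 < s < 0 be real numbers. There exist constants c, C > 0 depending only on s and s0 such that for every a : ℤ → ℂ with Σ_n (1+n^2)^{s}|a(n)|^2 < ∞ and every dyadic M = 2^m ≥ 1: c · Σ_n (M^2+n^2)^s |a(n)|^2 ≤ Σ_{k ≥ 0} (2^k M)^{-2s0+2s} Σ_n ((2^k M)^2 + n^2)^{s0} |a(n)|^2 ≤ C · Σ_n (M^2+n^2)^s |a(n)|^2. -/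
open Real

private lemma geom_pow_rpow (x : ℝ) (hx : 0 ≤ x) (t : ℝ) (k : ℕ) :
    (x ^ k) ^ t = (x ^ t) ^ k := by
  rw [← Real.rpow_natCast x k, ← Real.rpow_natCast (x ^ t) k, ← Real.rpow_mul hx,
      ← Real.rpow_mul hx, mul_comm]

private lemma pointwise_bounds (s0 s : ℝ) (h0 : s0 < s) (hs : s < 0) (M : ℝ) (hM : 1 ≤ M)
    (y : ℝ) (hy : 0 ≤ y) :
    Summable (fun k : ℕ => ((2:ℝ)^k * M) ^ (-2*s0+2*s) * (((2:ℝ)^k * M)^2 + y) ^ s0) ∧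
    (2:ℝ)^s0 * (4:ℝ)^s * (M^2 + y) ^ s ≤
      (∑' k : ℕ, ((2:ℝ)^k * M) ^ (-2*s0+2*s) * (((2:ℝ)^k*M)^2 + y) ^ s0) ∧
    (∑' k : ℕ, ((2:ℝ)^k * M) ^ (-2*s0+2*s) * (((2:ℝ)^k*M)^2 + y) ^ s0) ≤
      ((1 - (4:ℝ)^(s0-s))⁻¹ + (1 - (4:ℝ)^s)⁻¹) * (M^2 + y) ^ s := by
  have hMpos : 0 < M := lt_of_lt_of_le one_pos hM
  have hM2 : (1:ℝ) ≤ M^2 := by nlinarith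
  set Q : ℝ := M^2 + y with hQdef
  have hQpos : 0 < Q := by positivity
  set g : ℕ → ℝ := fun k => ((2:ℝ)^k * M) ^ (-2*s0+2*s) * (((2:ℝ)^k * M)^2 + y) ^ s0 with hgdef
  have hKpos : ∀ k : ℕ, (0:ℝ) < (2:ℝ)^k * M := fun k => by positivity
  have hPpos : ∀ k : ℕ, (0:ℝ) < (4:ℝ)^k * M^2 := fun k => by positivity
  have hsq : ∀ k : ℕ, ((2:ℝ)^k * M)^2 = (4:ℝ)^k * M^2 := by
    intro k; rw [mul_pow, ← pow_mul, mul_comm k 2, pow_mul]; norm_num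
  have hgrw : ∀ k : ℕ, g k = ((4:ℝ)^k * M^2) ^ (s - s0) * ((4:ℝ)^k * M^2 + y) ^ s0 := by
    intro k
    have h1 : ((2:ℝ)^k * M) ^ (-2*s0+2*s) = (((2:ℝ)^k * M)^2) ^ (s - s0) := by
      rw [← Real.rpow_two, ← Real.rpow_mul (hKpos k).le]
      ring_nf
    rw [hgdef]
    simp only [h1, hsq k]
  have hg_nonneg : ∀ k, 0 ≤ g k := by
    intro k; rw [hgrw k]; positivity
  have hbound1 : ∀ k : ℕ, g k ≤ ((4:ℝ)^k * M^2) ^ s := by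
    intro k
    rw [hgrw k]
    have h2 : ((4:ℝ)^k * M^2 + y) ^ s0 ≤ ((4:ℝ)^k * M^2) ^ s0 :=
      Real.rpow_le_rpow_of_nonpos (hPpos k) (le_add_of_nonneg_right hy) (le_of_lt (h0.trans hs))
    calc ((4:ℝ)^k * M^2) ^ (s-s0) * ((4:ℝ)^k * M^2 + y) ^ s0
        ≤ ((4:ℝ)^k * M^2) ^ (s-s0) * ((4:ℝ)^k * M^2) ^ s0 := by
          exact mul_le_mul_of_nonneg_left h2 (Real.rpow_nonneg (hPpos k).le _)
      _ = ((4:ℝ)^k * M^2) ^ s := by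
          rw [← Real.rpow_add (hPpos k)]; ring_nf
  have hbound1' : ∀ k : ℕ, g k ≤ ((4:ℝ)^s)^k * (M^2) ^ s := by
    intro k
    refine (hbound1 k).trans_eq ?_
    rw [Real.mul_rpow (by positivity) (by positivity), geom_pow_rpow 4 (by norm_num) s k]
  have h4s_lt : (4:ℝ)^s < 1 := Real.rpow_lt_one_of_one_lt_of_neg (by norm_num) hs
  have h4s_nonneg : (0:ℝ) ≤ (4:ℝ)^s := Real.rpow_nonneg (by norm_num) _
  have hsummable : Summable g :=
    Summable.of_nonneg_of_le hg_nonneg hbound1'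
      ((summable_geometric_of_lt_one h4s_nonneg h4s_lt).mul_right _)
  have hex : ∃ k : ℕ, Q ≤ (4:ℝ)^k * M^2 := by
    obtain ⟨k, hk⟩ := pow_unbounded_of_one_lt Q (by norm_num : (1:ℝ) < 4)
    exact ⟨k, hk.le.trans (le_mul_of_one_le_right (by positivity) hM2)⟩
  classical
  set k0 := Nat.find hex with hk0def
  have hk0 : Q ≤ (4:ℝ)^k0 * M^2 := Nat.find_spec hex
  have hk0min : ∀ j, j < k0 → (4:ℝ)^j * M^2 < Q := fun j hj =>
    lt_of_not_ge (Nat.find_min hex hj)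
  constructor
  · exact hsummable
  constructor
  · -- lower bound
    set P : ℝ := (4:ℝ)^k0 * M^2 with hPdef
    have hPp : 0 < P := hPpos k0
    have hyP : y ≤ P := (le_add_of_nonneg_left (by positivity)).trans hk0
    have hP4Q : P ≤ 4 * Q := by
      rcases Nat.eq_zero_or_pos k0 with h | h
      · rw [hPdef, h]
        simp only [pow_zero, one_mul]
        nlinarith
      · have := hk0min (k0 - 1) (Nat.sub_lt h one_pos)
        have hP4 : P = 4 * ((4:ℝ)^(k0-1) * M^2) := by
          rw [hPdef, ← mul_assoc, ← pow_succ']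
          congr 2
          omega
        nlinarith
    have step1 : (2*P) ^ s0 ≤ (P + y) ^ s0 :=
      Real.rpow_le_rpow_of_nonpos (by positivity) (by linarith) (le_of_lt (h0.trans hs))
    have step2 : 2 ^ s0 * P ^ s ≤ g k0 := by
      rw [hgrw k0]
      have hPs : P ^ (s - s0) * P ^ s0 = P ^ s := by
        rw [← Real.rpow_add hPp]; ring_nf
      calc (2:ℝ) ^ s0 * P ^ s = P ^ (s - s0) * ((2:ℝ)^s0 * P ^ s0) := by
            rw [← hPs]; ring
        _ = P ^ (s - s0) * (2*P) ^ s0 := by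
            rw [Real.mul_rpow (by norm_num) hPp.le]
        _ ≤ P ^ (s - s0) * (P + y) ^ s0 :=
            mul_le_mul_of_nonneg_left step1 (Real.rpow_nonneg hPp.le _)
    have step3 : (4:ℝ)^s * Q ^ s ≤ P ^ s := by
      rw [← Real.mul_rpow (by norm_num) hQpos.le]
      exact Real.rpow_le_rpow_of_nonpos hPp hP4Q hs.le
    have step4 : g k0 ≤ ∑' k, g k := Summable.le_tsum hsummable k0 (fun j _ => hg_nonneg j)
    have h2s0 : (0:ℝ) < (2:ℝ)^s0 := Real.rpow_pos_of_pos (by norm_num) _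
    calc (2:ℝ)^s0 * (4:ℝ)^s * Q ^ s = (2:ℝ)^s0 * ((4:ℝ)^s * Q^s) := by ring
      _ ≤ (2:ℝ)^s0 * P ^ s := by
          exact mul_le_mul_of_nonneg_left step3 h2s0.le
      _ ≤ g k0 := step2
      _ ≤ ∑' k, g k := step4
  · -- upper bound
    set r : ℝ := (4:ℝ)^(s0 - s) with hrdef
    have hr_nonneg : 0 ≤ r := Real.rpow_nonneg (by norm_num) _
    have hr_lt : r < 1 := Real.rpow_lt_one_of_one_lt_of_neg (by norm_num) (by linarith)
    -- head bound
    have hhead_term : ∀ k, k < k0 → g k ≤ Q ^ s * r ^ (k0 - 1 - k) := by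
      intro k hk
      have hj : k + (k0 - 1 - k) = k0 - 1 := by omega
      have hQs : (4:ℝ)^k * M^2 * (4:ℝ)^(k0-1-k) ≤ Q := by
        have := hk0min (k0 - 1) (Nat.sub_lt (by omega) one_pos)
        calc (4:ℝ)^k * M^2 * (4:ℝ)^(k0-1-k) = (4:ℝ)^(k0-1) * M^2 := by
              rw [mul_right_comm, ← pow_add, hj]
          _ ≤ Q := this.le
      have hmono : ((4:ℝ)^k * M^2) ^ (s - s0) ≤ (Q * ((4:ℝ)^(k0-1-k))⁻¹) ^ (s - s0) := by
        apply Real.rpow_le_rpow (hPpos k).le _ (by linarith)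
        have h' : (4:ℝ)^k * M^2 ≤ Q / (4:ℝ)^(k0-1-k) := (le_div_iff₀ (by positivity)).mpr hQs
        calc (4:ℝ)^k * M^2 ≤ Q / (4:ℝ)^(k0-1-k) := h'
          _ = Q * ((4:ℝ)^(k0-1-k))⁻¹ := div_eq_mul_inv _ _
      have hrw2 : (Q * ((4:ℝ)^(k0-1-k))⁻¹) ^ (s - s0) = Q ^ (s-s0) * r ^ (k0-1-k) := by
        rw [Real.mul_rpow hQpos.le (by positivity), Real.inv_rpow (by positivity),
            ← Real.rpow_neg (by positivity), hrdef,
            ← geom_pow_rpow 4 (by norm_num) (s0 - s) (k0-1-k)]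
        congr 1
        ring
      have : g k ≤ ((4:ℝ)^k * M^2) ^ (s - s0) * Q ^ s0 := by
        rw [hgrw k]
        have h2 : ((4:ℝ)^k * M^2 + y) ^ s0 ≤ Q ^ s0 := by
          apply Real.rpow_le_rpow_of_nonpos hQpos _ (le_of_lt (h0.trans hs))
          rw [hQdef]
          have h1le : (1:ℝ) ≤ (4:ℝ)^k := one_le_pow₀ (by norm_num : (1:ℝ) ≤ 4)
          nlinarith
        exact mul_le_mul_of_nonneg_left h2 (Real.rpow_nonneg (hPpos k).le _)
      calc g k ≤ ((4:ℝ)^k * M^2) ^ (s - s0) * Q ^ s0 := this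
        _ ≤ (Q ^ (s-s0) * r ^ (k0-1-k)) * Q ^ s0 := by
            have hmono' : ((4:ℝ)^k * M^2) ^ (s - s0) ≤ Q ^ (s-s0) * r ^ (k0-1-k) :=
              hrw2 ▸ hmono
            exact mul_le_mul_of_nonneg_right hmono' (Real.rpow_nonneg hQpos.le _)
        _ = Q ^ s * r ^ (k0-1-k) := by
            rw [mul_right_comm, ← Real.rpow_add hQpos]; ring_nf
    have hhead : ∑ k ∈ Finset.range k0, g k ≤ Q ^ s * (1 - r)⁻¹ := by
      calc ∑ k ∈ Finset.range k0, g k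
          ≤ ∑ k ∈ Finset.range k0, Q ^ s * r ^ (k0 - 1 - k) := by
            apply Finset.sum_le_sum
            intro k hk
            exact hhead_term k (Finset.mem_range.mp hk)
        _ = Q ^ s * ∑ k ∈ Finset.range k0, r ^ (k0 - 1 - k) := by
            rw [Finset.mul_sum]
        _ = Q ^ s * ∑ k ∈ Finset.range k0, r ^ k := by
            rw [Finset.sum_range_reflect (fun k => r ^ k) k0]
        _ ≤ Q ^ s * (1 - r)⁻¹ := by
            apply mul_le_mul_of_nonneg_left _ (Real.rpow_nonneg hQpos.le _)
            rw [← tsum_geometric_of_lt_one hr_nonneg hr_lt]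
            exact Summable.sum_le_tsum _ (fun i _ => pow_nonneg hr_nonneg i)
              (summable_geometric_of_lt_one hr_nonneg hr_lt)
    have htail_term : ∀ i : ℕ, g (i + k0) ≤ Q ^ s * ((4:ℝ)^s) ^ i := by
      intro i
      have h1 : (4:ℝ)^i * Q ≤ (4:ℝ)^(i+k0) * M^2 := by
        rw [pow_add, mul_assoc]
        exact mul_le_mul_of_nonneg_left hk0 (by positivity)
      calc g (i + k0) ≤ ((4:ℝ)^(i+k0) * M^2) ^ s := hbound1 _
        _ ≤ ((4:ℝ)^i * Q) ^ s := Real.rpow_le_rpow_of_nonpos (by positivity) h1 hs.le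
        _ = Q ^ s * ((4:ℝ)^s) ^ i := by
            rw [Real.mul_rpow (by positivity) hQpos.le, geom_pow_rpow 4 (by norm_num), mul_comm]
    have htail : ∑' i : ℕ, g (i + k0) ≤ Q ^ s * (1 - (4:ℝ)^s)⁻¹ := by
      have hsum2 : Summable (fun i : ℕ => g (i + k0)) := (summable_nat_add_iff k0).mpr hsummable
      calc ∑' i : ℕ, g (i + k0) ≤ ∑' i : ℕ, Q ^ s * ((4:ℝ)^s) ^ i := by
            exact Summable.tsum_le_tsum htail_term hsum2
              ((summable_geometric_of_lt_one h4s_nonneg h4s_lt).mul_left _)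
        _ = Q ^ s * (1 - (4:ℝ)^s)⁻¹ := by
            rw [tsum_mul_left, tsum_geometric_of_lt_one h4s_nonneg h4s_lt]
    calc (∑' k, g k) = ∑ k ∈ Finset.range k0, g k + ∑' i : ℕ, g (i + k0) :=
          (Summable.sum_add_tsum_nat_add k0 hsummable).symm
      _ ≤ Q ^ s * (1 - r)⁻¹ + Q ^ s * (1 - (4:ℝ)^s)⁻¹ := add_le_add hhead htail
      _ = ((1 - r)⁻¹ + (1 - (4:ℝ)^s)⁻¹) * Q ^ s := by ring

theorem adapted_norm_equivalence (s0 s : ℝ) (h0 : s0 < s) (hs : s < 0) :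
    ∃ c C : ℝ, 0 < c ∧ 0 < C ∧
      ∀ a : ℤ → ℂ, (Summable fun n : ℤ => (1 + (n : ℝ) ^ 2) ^ s * ‖a n‖ ^ 2) →
        ∀ m : ℕ,
          c * ∑' n : ℤ, (((2 : ℝ) ^ m) ^ 2 + (n : ℝ) ^ 2) ^ s * ‖a n‖ ^ 2 ≤
            (∑' k : ℕ, ((2 : ℝ) ^ k * (2 : ℝ) ^ m) ^ (-2 * s0 + 2 * s) *
              ∑' n : ℤ, (((2 : ℝ) ^ k * (2 : ℝ) ^ m) ^ 2 + (n : ℝ) ^ 2) ^ s0 * ‖a n‖ ^ 2) ∧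
          (∑' k : ℕ, ((2 : ℝ) ^ k * (2 : ℝ) ^ m) ^ (-2 * s0 + 2 * s) *
              ∑' n : ℤ, (((2 : ℝ) ^ k * (2 : ℝ) ^ m) ^ 2 + (n : ℝ) ^ 2) ^ s0 * ‖a n‖ ^ 2) ≤
            C * ∑' n : ℤ, (((2 : ℝ) ^ m) ^ 2 + (n : ℝ) ^ 2) ^ s * ‖a n‖ ^ 2 := by
  have h4s_lt : (4:ℝ)^s < 1 := Real.rpow_lt_one_of_one_lt_of_neg (by norm_num) hs
  have hr_lt : (4:ℝ)^(s0-s) < 1 :=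
    Real.rpow_lt_one_of_one_lt_of_neg (by norm_num) (by linarith)
  refine ⟨(2:ℝ)^s0 * (4:ℝ)^s, (1 - (4:ℝ)^(s0-s))⁻¹ + (1 - (4:ℝ)^s)⁻¹, by positivity, ?_, ?_⟩
  · have h1 : (0:ℝ) < 1 - (4:ℝ)^(s0-s) := by linarith
    have h2 : (0:ℝ) < 1 - (4:ℝ)^s := by linarith
    positivity
  intro a ha m
  set M : ℝ := (2:ℝ)^m with hMdef
  have hM : 1 ≤ M := one_le_pow₀ one_le_two
  have key := fun n : ℤ => pointwise_bounds s0 s h0 hs M hM ((n:ℝ)^2) (sq_nonneg _)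
  set F : ℕ → ℤ → ℝ := fun k n =>
    ((2:ℝ)^k * M) ^ (-2*s0+2*s) * ((((2:ℝ)^k * M)^2 + (n:ℝ)^2) ^ s0 * ‖a n‖^2) with hFdef
  have hb : ∀ n : ℤ, (0:ℝ) ≤ ‖a n‖^2 := fun n => sq_nonneg _
  have hFrow : ∀ n : ℤ, (fun k => F k n) =
      fun k => (((2:ℝ)^k*M)^(-2*s0+2*s) * (((2:ℝ)^k*M)^2+(n:ℝ)^2)^s0) * ‖a n‖^2 := by
    intro n; funext k; simp only [hFdef]; ring
  have hrowSummable : ∀ n : ℤ, Summable (fun k => F k n) := by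
    intro n; rw [hFrow n]; exact ((key n).1).mul_right _
  have hrowEq : ∀ n : ℤ, ∑' k, F k n =
      (∑' k : ℕ, ((2:ℝ)^k*M)^(-2*s0+2*s) * (((2:ℝ)^k*M)^2+(n:ℝ)^2)^s0) * ‖a n‖^2 := by
    intro n; rw [hFrow n]; exact tsum_mul_right
  have hlow : ∀ n : ℤ, (2:ℝ)^s0 * (4:ℝ)^s * ((M^2+(n:ℝ)^2)^s * ‖a n‖^2) ≤ ∑' k, F k n := by
    intro n
    rw [hrowEq n]
    have h1 := mul_le_mul_of_nonneg_right (key n).2.1 (hb n)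
    calc (2:ℝ)^s0 * (4:ℝ)^s * ((M^2+(n:ℝ)^2)^s * ‖a n‖^2)
        = ((2:ℝ)^s0 * (4:ℝ)^s * (M^2+(n:ℝ)^2)^s) * ‖a n‖^2 := by ring
      _ ≤ _ := h1
  have hupp : ∀ n : ℤ, ∑' k, F k n ≤
      ((1 - (4:ℝ)^(s0-s))⁻¹ + (1 - (4:ℝ)^s)⁻¹) * ((M^2+(n:ℝ)^2)^s * ‖a n‖^2) := by
    intro n
    rw [hrowEq n]
    have h1 := mul_le_mul_of_nonneg_right (key n).2.2 (hb n)
    calc _ ≤ (((1 - (4:ℝ)^(s0-s))⁻¹ + (1 - (4:ℝ)^s)⁻¹) * (M^2+(n:ℝ)^2)^s) * ‖a n‖^2 := h1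
      _ = ((1 - (4:ℝ)^(s0-s))⁻¹ + (1 - (4:ℝ)^s)⁻¹) * ((M^2+(n:ℝ)^2)^s * ‖a n‖^2) := by ring
  have hS : Summable (fun n : ℤ => (M^2+(n:ℝ)^2)^s * ‖a n‖^2) := by
    apply Summable.of_nonneg_of_le (fun n => by positivity) _ ha
    intro n
    apply mul_le_mul_of_nonneg_right _ (hb n)
    apply Real.rpow_le_rpow_of_nonpos (by positivity) _ hs.le
    nlinarith [hM, sq_nonneg (n:ℝ), sq_nonneg M]
  have hFnonneg : ∀ k n, 0 ≤ F k n := by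
    intro k n; simp only [hFdef]
    have : (0:ℝ) < (2:ℝ)^k * M := by positivity
    positivity
  have hrowSum : Summable (fun n : ℤ => ∑' k, F k n) :=
    Summable.of_nonneg_of_le (fun n => tsum_nonneg (fun k => hFnonneg k n)) hupp
      (hS.mul_left _)
  have hprod : Summable (fun p : ℤ × ℕ => F p.2 p.1) :=
    (summable_prod_of_nonneg (fun p => hFnonneg p.2 p.1)).2
      ⟨fun n => hrowSummable n, hrowSum⟩
  have hswap : ∑' (k : ℕ), ∑' (n : ℤ), F k n = ∑' (n : ℤ), ∑' (k : ℕ), F k n :=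
    Summable.tsum_comm hprod
  have hmid : ∀ k : ℕ, ((2:ℝ)^k*M)^(-2*s0+2*s) *
      (∑' n : ℤ, (((2:ℝ)^k*M)^2+(n:ℝ)^2)^s0 * ‖a n‖^2) = ∑' n : ℤ, F k n := by
    intro k; simp only [hFdef]; exact tsum_mul_left.symm
  constructor
  · calc (2:ℝ)^s0 * (4:ℝ)^s * ∑' n : ℤ, (M^2+(n:ℝ)^2)^s * ‖a n‖^2
        = ∑' n : ℤ, (2:ℝ)^s0 * (4:ℝ)^s * ((M^2+(n:ℝ)^2)^s * ‖a n‖^2) := tsum_mul_left.symm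
      _ ≤ ∑' n : ℤ, ∑' k : ℕ, F k n := Summable.tsum_le_tsum hlow (hS.mul_left _) hrowSum
      _ = ∑' k : ℕ, ∑' n : ℤ, F k n := hswap.symm
      _ = _ := tsum_congr (fun k => (hmid k).symm)
  · calc (∑' k : ℕ, ((2:ℝ)^k*M)^(-2*s0+2*s) *
          ∑' n : ℤ, (((2:ℝ)^k*M)^2+(n:ℝ)^2)^s0 * ‖a n‖^2)
        = ∑' k : ℕ, ∑' n : ℤ, F k n := tsum_congr hmid
      _ = ∑' n : ℤ, ∑' k : ℕ, F k n := hswap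
      _ ≤ ∑' n : ℤ, ((1 - (4:ℝ)^(s0-s))⁻¹ + (1 - (4:ℝ)^s)⁻¹) *
            ((M^2+(n:ℝ)^2)^s * ‖a n‖^2) := Summable.tsum_le_tsum hupp hrowSum (hS.mul_left _)
      _ = _ := tsum_mul_left
end

section
/- Let -1/3 < s ≤ 0. There exists a constant C = C(s) such that for every n ∈ ℤ: Σ over pairs (n1, n3) ∈ ℤ^2 with n1 ≠ n and n3 ≠ n of (max(1, |n1|, |n2|, |n3|, |n|))^{-6s} / |n1^4 - n2^4 + n3^4 - n^4| ≤ C, where n2 := n1 + n3 - n. -/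
open scoped ENNReal NNReal

set_option maxHeartbeats 1000000 in
private lemma key_real_bound (s : ℝ) (hs1 : -1 / 3 < s) (hs2 : s ≤ 0) (n n1 n3 : ℤ)
    (h1 : n1 ≠ n) (h3 : n3 ≠ n) :
    (max (1 : ℝ)
        (max (max |(n1 : ℝ)| |((n1 + n3 - n : ℤ) : ℝ)|)
          (max |(n3 : ℝ)| |(n : ℝ)|))) ^ (-6 * s) /
      |(n1 : ℝ) ^ 4 - ((n1 + n3 - n : ℤ) : ℝ) ^ 4 + (n3 : ℝ) ^ 4 - (n : ℝ) ^ 4|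
    ≤ (2 * |((n1 - n : ℤ) : ℝ)| ^ (-(2 + 3 * s))) *
      (2 * |((n3 - n : ℤ) : ℝ)| ^ (-(2 + 3 * s))) := by
  set M : ℝ := max (1 : ℝ)
      (max (max |(n1 : ℝ)| |((n1 + n3 - n : ℤ) : ℝ)|)
        (max |(n3 : ℝ)| |(n : ℝ)|)) with hMdef
  set a : ℝ := ((n1 - n : ℤ) : ℝ) with hadef
  set b : ℝ := ((n3 - n : ℤ) : ℝ) with hbdef
  have ha1 : (1 : ℝ) ≤ |a| := by
    have h := Int.one_le_abs (sub_ne_zero.mpr h1)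
    rw [hadef, ← Int.cast_abs]
    exact_mod_cast h
  have hb1 : (1 : ℝ) ≤ |b| := by
    have h := Int.one_le_abs (sub_ne_zero.mpr h3)
    rw [hbdef, ← Int.cast_abs]
    exact_mod_cast h
  have hM1 : (1 : ℝ) ≤ M := le_max_left _ _
  have hM0 : (0 : ℝ) ≤ M := by linarith
  set S : ℝ := (n1 : ℝ) ^ 2 + ((n1 + n3 - n : ℤ) : ℝ) ^ 2 + (n3 : ℝ) ^ 2 + (n : ℝ) ^ 2
      + 2 * ((n1 : ℝ) + (n3 : ℝ)) ^ 2 with hSdef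
  -- S is at least 1
  have hS1 : (1 : ℝ) ≤ S := by
    have hZ : (1 : ℤ) ≤ n1 ^ 2 + (n1 + n3 - n) ^ 2 + n3 ^ 2 + n ^ 2 + 2 * (n1 + n3) ^ 2 := by
      rcases eq_or_ne n1 0 with h | h
      · have hn : n ≠ 0 := by rw [h] at h1; exact fun hc => h1 hc.symm
        have : (1 : ℤ) ≤ n ^ 2 := by
          have := sq_nonneg n
          rcases lt_or_gt_of_ne hn with h' | h' <;> nlinarith
        nlinarith [sq_nonneg n1, sq_nonneg (n1 + n3 - n), sq_nonneg n3, sq_nonneg (n1 + n3)]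
      · have : (1 : ℤ) ≤ n1 ^ 2 := by
          rcases lt_or_gt_of_ne h with h' | h' <;> nlinarith
        nlinarith [sq_nonneg n, sq_nonneg (n1 + n3 - n), sq_nonneg n3, sq_nonneg (n1 + n3)]
    have hcast : ((1:ℤ):ℝ) ≤ ((n1 ^ 2 + (n1 + n3 - n) ^ 2 + n3 ^ 2 + n ^ 2 + 2 * (n1 + n3) ^ 2 : ℤ) : ℝ) :=
      Int.cast_le.mpr hZ
    push_cast at hcast
    rw [hSdef]; push_cast; linarith
  have hSpos : (0 : ℝ) < S := by linarith
  -- M^2 ≤ S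
  have hM2S : M ^ 2 ≤ S := by
    have e1 : ((n1:ℝ)) ^ 2 ≤ S := by
      rw [hSdef]
      nlinarith [sq_nonneg (((n1 + n3 - n : ℤ) : ℝ)), sq_nonneg ((n3 : ℝ)), sq_nonneg ((n : ℝ)), sq_nonneg ((n1 : ℝ) + (n3 : ℝ))]
    have e2 : (((n1 + n3 - n : ℤ) : ℝ)) ^ 2 ≤ S := by
      rw [hSdef]
      nlinarith [sq_nonneg ((n1 : ℝ)), sq_nonneg ((n3 : ℝ)), sq_nonneg ((n : ℝ)), sq_nonneg ((n1 : ℝ) + (n3 : ℝ))]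
    have e3 : ((n3:ℝ)) ^ 2 ≤ S := by
      rw [hSdef]
      nlinarith [sq_nonneg (((n1 + n3 - n : ℤ) : ℝ)), sq_nonneg ((n1 : ℝ)), sq_nonneg ((n : ℝ)), sq_nonneg ((n1 : ℝ) + (n3 : ℝ))]
    have e4 : ((n:ℝ)) ^ 2 ≤ S := by
      rw [hSdef]
      nlinarith [sq_nonneg (((n1 + n3 - n : ℤ) : ℝ)), sq_nonneg ((n1 : ℝ)), sq_nonneg ((n3 : ℝ)), sq_nonneg ((n1 : ℝ) + (n3 : ℝ))]
    have hsq : ∀ x : ℝ, x ^ 2 ≤ S → x ≤ Real.sqrt S := fun x hx => Real.le_sqrt_of_sq_le hx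
    have f1 : |(n1:ℝ)| ≤ Real.sqrt S := hsq _ (by rw [sq_abs]; exact e1)
    have f2 : |((n1 + n3 - n : ℤ):ℝ)| ≤ Real.sqrt S := hsq _ (by rw [sq_abs]; exact e2)
    have f3 : |(n3:ℝ)| ≤ Real.sqrt S := hsq _ (by rw [sq_abs]; exact e3)
    have f4 : |(n:ℝ)| ≤ Real.sqrt S := hsq _ (by rw [sq_abs]; exact e4)
    have f0 : (1:ℝ) ≤ Real.sqrt S := hsq 1 (by rw [one_pow]; exact hS1)
    have hMs : M ≤ Real.sqrt S := by
      rw [hMdef]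
      exact max_le f0 (max_le (max_le f1 f2) (max_le f3 f4))
    nlinarith [Real.sq_sqrt (le_of_lt hSpos), Real.sqrt_nonneg S]
  -- |a|, |b| ≤ 2M
  have habs1 : |(n1 : ℝ)| ≤ M := le_trans (le_trans (le_max_left _ _) (le_max_left _ _))
    (le_max_right _ _)
  have habs3 : |(n3 : ℝ)| ≤ M := le_trans (le_trans (le_max_left _ _) (le_max_right _ _))
    (le_max_right _ _)
  have habsn : |(n : ℝ)| ≤ M := le_trans (le_trans (le_max_right _ _) (le_max_right _ _))
    (le_max_right _ _)
  have haM : |a| ≤ 2 * M := by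
    have : a = (n1 : ℝ) - (n : ℝ) := by rw [hadef]; push_cast; ring
    rw [this]
    calc |(n1 : ℝ) - (n : ℝ)| ≤ |(n1 : ℝ)| + |(n : ℝ)| := abs_sub _ _
      _ ≤ 2 * M := by linarith
  have hbM : |b| ≤ 2 * M := by
    have : b = (n3 : ℝ) - (n : ℝ) := by rw [hbdef]; push_cast; ring
    rw [this]
    calc |(n3 : ℝ) - (n : ℝ)| ≤ |(n3 : ℝ)| + |(n : ℝ)| := abs_sub _ _
      _ ≤ 2 * M := by linarith
  -- phase identity
  have hphase : (n1 : ℝ) ^ 4 - ((n1 + n3 - n : ℤ) : ℝ) ^ 4 + (n3 : ℝ) ^ 4 - (n : ℝ) ^ 4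
      = -(a * b) * S := by
    rw [hSdef, hadef, hbdef]; push_cast; ring
  have habsphase : |(n1 : ℝ) ^ 4 - ((n1 + n3 - n : ℤ) : ℝ) ^ 4 + (n3 : ℝ) ^ 4 - (n : ℝ) ^ 4|
      = |a| * |b| * S := by
    rw [hphase, abs_mul, abs_neg, abs_mul, abs_of_nonneg (le_of_lt hSpos)]
  rw [habsphase]
  -- rewrite the RHS
  set x : ℝ := |a| * |b| with hxdef
  have hx1 : (1 : ℝ) ≤ x := one_le_mul_of_one_le_of_one_le ha1 hb1
  have hxpos : (0 : ℝ) < x := by linarith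
  have hxM : x ≤ 4 * M ^ 2 := by nlinarith [abs_nonneg a, abs_nonneg b]
  have hrhs : (2 * |a| ^ (-(2 + 3 * s))) * (2 * |b| ^ (-(2 + 3 * s)))
      = 4 / x ^ (2 + 3 * s) := by
    rw [Real.rpow_neg (abs_nonneg a), Real.rpow_neg (abs_nonneg b), hxdef,
      Real.mul_rpow (abs_nonneg a) (abs_nonneg b)]
    field_simp
    ring
  rw [hrhs]
  have hMpos : (0 : ℝ) < M := by linarith
  have hxp_pos : (0 : ℝ) < x ^ (2 + 3 * s) := Real.rpow_pos_of_pos hxpos _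
  rw [div_le_div_iff₀ (by positivity) hxp_pos]
  -- key algebraic facts
  have hA : x ^ (2 + 3 * s) = x ^ (1 + 3 * s) * x := by
    rw [show (2 : ℝ) + 3 * s = (1 + 3 * s) + 1 by ring, Real.rpow_add hxpos, Real.rpow_one]
  have hB : x ^ (1 + 3 * s) ≤ 4 * M ^ (2 + 6 * s) := by
    have hstep1 : x ^ (1 + 3 * s) ≤ (4 * M ^ 2) ^ (1 + 3 * s) :=
      Real.rpow_le_rpow (le_of_lt hxpos) hxM (by linarith)
    have hstep2 : (4 * M ^ 2 : ℝ) ^ (1 + 3 * s) = (4 : ℝ) ^ (1 + 3 * s) * M ^ (2 + 6 * s) := by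
      rw [Real.mul_rpow (by norm_num) (sq_nonneg M)]
      congr 1
      rw [← Real.rpow_natCast M 2, ← Real.rpow_mul hM0]
      norm_num
      ring_nf
    have hstep3 : (4 : ℝ) ^ (1 + 3 * s) ≤ 4 := by
      calc (4 : ℝ) ^ (1 + 3 * s) ≤ (4 : ℝ) ^ (1 : ℝ) :=
            Real.rpow_le_rpow_of_exponent_le (by norm_num) (by linarith)
        _ = 4 := Real.rpow_one 4
    have hMexp : (0 : ℝ) ≤ M ^ (2 + 6 * s) := le_of_lt (Real.rpow_pos_of_pos hMpos _)
    calc x ^ (1 + 3 * s) ≤ (4 : ℝ) ^ (1 + 3 * s) * M ^ (2 + 6 * s) := by rw [← hstep2]; exact hstep1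
      _ ≤ 4 * M ^ (2 + 6 * s) := mul_le_mul_of_nonneg_right hstep3 hMexp
  have hC : M ^ (-6 * s) * M ^ (2 + 6 * s) = M ^ 2 := by
    rw [← Real.rpow_add hMpos]
    rw [show (-6 * s) + (2 + 6 * s) = (2 : ℝ) by ring]
    rw [show ((2 : ℝ) : ℝ) = ((2 : ℕ) : ℝ) by norm_num, Real.rpow_natCast]
  have hMn6s : (0 : ℝ) ≤ M ^ (-6 * s) := le_of_lt (Real.rpow_pos_of_pos hMpos _)
  calc M ^ (-6 * s) * x ^ (2 + 3 * s) = M ^ (-6 * s) * (x ^ (1 + 3 * s) * x) := by rw [hA]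
    _ ≤ M ^ (-6 * s) * (4 * M ^ (2 + 6 * s) * x) := by
        apply mul_le_mul_of_nonneg_left _ hMn6s
        exact mul_le_mul_of_nonneg_right hB (le_of_lt hxpos)
    _ = 4 * (M ^ (-6 * s) * M ^ (2 + 6 * s)) * x := by ring
    _ = 4 * M ^ 2 * x := by rw [hC]
    _ ≤ 4 * (|a| * |b| * S) := by rw [← hxdef]; nlinarith

theorem phase_counting_bound (s : ℝ) (hs1 : -1 / 3 < s) (hs2 : s ≤ 0) :
    ∃ C : ℝ≥0, ∀ n : ℤ,
      (∑' q : {p : ℤ × ℤ // p.1 ≠ n ∧ p.2 ≠ n},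
        ENNReal.ofReal
          ((max (1 : ℝ)
              (max (max |(q.1.1 : ℝ)| |((q.1.1 + q.1.2 - n : ℤ) : ℝ)|)
                (max |(q.1.2 : ℝ)| |(n : ℝ)|))) ^ (-6 * s) /
            |(q.1.1 : ℝ) ^ 4 - ((q.1.1 + q.1.2 - n : ℤ) : ℝ) ^ 4 + (q.1.2 : ℝ) ^ 4
              - (n : ℝ) ^ 4|)) ≤ (C : ℝ≥0∞) := by
  set g : ℤ → ℝ≥0∞ := fun a => ENNReal.ofReal (2 * |(a : ℝ)| ^ (-(2 + 3 * s))) with hgdef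
  have hgsum : ∑' a : ℤ, g a ≠ ⊤ := by
    have hsummable : Summable fun a : ℤ => 2 * |(a : ℝ)| ^ (-(2 + 3 * s)) :=
      (Real.summable_abs_int_rpow (by linarith)).mul_left 2
    have hnonneg : ∀ a : ℤ, 0 ≤ 2 * |(a : ℝ)| ^ (-(2 + 3 * s)) := by
      intro a; positivity
    rw [hgdef, ← ENNReal.ofReal_tsum_of_nonneg hnonneg hsummable]
    exact ENNReal.ofReal_ne_top
  set T : ℝ≥0∞ := ∑' a : ℤ, g a with hTdef
  refine ⟨(T * T).toNNReal, fun n => ?_⟩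
  have hcoe : (((T * T).toNNReal : ℝ≥0) : ℝ≥0∞) = T * T :=
    ENNReal.coe_toNNReal (ENNReal.mul_ne_top hgsum hgsum)
  rw [hcoe]
  have step1 : (∑' q : {p : ℤ × ℤ // p.1 ≠ n ∧ p.2 ≠ n},
        ENNReal.ofReal
          ((max (1 : ℝ)
              (max (max |(q.1.1 : ℝ)| |((q.1.1 + q.1.2 - n : ℤ) : ℝ)|)
                (max |(q.1.2 : ℝ)| |(n : ℝ)|))) ^ (-6 * s) /
            |(q.1.1 : ℝ) ^ 4 - ((q.1.1 + q.1.2 - n : ℤ) : ℝ) ^ 4 + (q.1.2 : ℝ) ^ 4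
              - (n : ℝ) ^ 4|))
      ≤ ∑' q : {p : ℤ × ℤ // p.1 ≠ n ∧ p.2 ≠ n}, g (q.1.1 - n) * g (q.1.2 - n) := by
    apply ENNReal.tsum_le_tsum
    intro q
    have hkey := key_real_bound s hs1 hs2 n q.1.1 q.1.2 q.2.1 q.2.2
    calc ENNReal.ofReal _ ≤ ENNReal.ofReal ((2 * |((q.1.1 - n : ℤ) : ℝ)| ^ (-(2 + 3 * s))) *
          (2 * |((q.1.2 - n : ℤ) : ℝ)| ^ (-(2 + 3 * s)))) := ENNReal.ofReal_le_ofReal hkey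
      _ = g (q.1.1 - n) * g (q.1.2 - n) := by
          rw [hgdef, ← ENNReal.ofReal_mul (by positivity)]
  have step2 : (∑' q : {p : ℤ × ℤ // p.1 ≠ n ∧ p.2 ≠ n}, g (q.1.1 - n) * g (q.1.2 - n))
      ≤ ∑' p : ℤ × ℤ, g p.1 * g p.2 := by
    have hinj : Function.Injective
        (fun q : {p : ℤ × ℤ // p.1 ≠ n ∧ p.2 ≠ n} => ((q.1.1 - n, q.1.2 - n) : ℤ × ℤ)) := by
      intro q r h
      simp only [Prod.mk.injEq] at h
      apply Subtype.ext
      apply Prod.ext <;> omega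
    exact ENNReal.tsum_comp_le_tsum_of_injective hinj (fun p : ℤ × ℤ => g p.1 * g p.2)
  have step3 : (∑' p : ℤ × ℤ, g p.1 * g p.2) = T * T := by
    rw [ENNReal.tsum_prod']
    simp_rw [ENNReal.tsum_mul_left]
    rw [ENNReal.tsum_mul_right, hTdef]
  calc _ ≤ _ := step1
    _ ≤ _ := step2
    _ = T * T := step3
end
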